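/- Let M ⊆ B(H) be a von Neumann algebra and v ∈ M an isometry (v*v = 1). Suppose v = t₁* a₁ t₁ + t₂* a₂ t₂ where a₁, a₂ ∈ M with ‖aᵢ‖ ≤ 1 and t₁, t₂ ∈ M are invertible with t₁*t₁ + t₂*t₂ = 1. Then a₁ and a₂ are isometries, and each aᵢ is similar to v via the invertible element tᵢ: aᵢ = tᵢ v tᵢ⁻¹. -/

import Mathlib

/-!
Put `cᵢ = 1 - aᵢ* aᵢ`, which is positive because `aᵢ` is a contraction. Expanding, with
`t₁* t₁ + t₂* t₂ = 1` and `v = t₁* a₁ t₁ + t₂* a₂ t₂`,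

  `∑ᵢ ((aᵢ tᵢ - tᵢ v)* (aᵢ tᵢ - tᵢ v) + tᵢ* cᵢ tᵢ) = 1 - v* v = 0`.

All summands are positive, so each vanishes: `aᵢ tᵢ = tᵢ v`, and `tᵢ* cᵢ tᵢ = 0`, whence `cᵢ = 0`
since `tᵢ` is invertible.
-/

lemma star_mul_self_le_one_of_norm_le_one {A : Type*} [CStarAlgebra A] [PartialOrder A]
    [StarOrderedRing A] {a : A} (ha : ‖a‖ ≤ 1) : star a * a ≤ 1 := by
  rw [← CStarAlgebra.norm_le_one_iff_of_nonneg _ (star_mul_self_nonneg a),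
    CStarRing.norm_star_mul_self]
  exact mul_le_one₀ ha (norm_nonneg a) ha

lemma eq_zero_of_star_mul_mul_eq_zero {R : Type*} [MonoidWithZero R] [StarMul R]
    {c t s : R} (hts : t * s = 1) (hc : star t * c * t = 0) : c = 0 :=
  calc c = star (t * s) * c * (t * s) := by rw [hts, star_one, one_mul, mul_one]
    _ = star s * (star t * c * t) * s := by simp only [star_mul, mul_assoc]
    _ = 0 := by rw [hc, mul_zero, zero_mul]

def intertwiningDefect {R : Type*} [Ring R] [StarRing R] (a t v : R) : R :=
  star (a * t - t * v) * (a * t - t * v) + star t * (1 - star a * a) * t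

lemma intertwiningDefect_add_intertwiningDefect {R : Type*} [Ring R] [StarRing R]
    {v a₁ a₂ t₁ t₂ : R} (hsum : star t₁ * t₁ + star t₂ * t₂ = 1)
    (hdec : v = star t₁ * a₁ * t₁ + star t₂ * a₂ * t₂) :
    intertwiningDefect a₁ t₁ v + intertwiningDefect a₂ t₂ v = 1 - star v * v := by
  have hstar : star v = star t₁ * star a₁ * t₁ + star t₂ * star a₂ * t₂ := by
    simp only [hdec, star_add, star_mul, star_star, mul_assoc]
  calc _ = (star t₁ * t₁ + star t₂ * t₂) + star v * (star t₁ * t₁ + star t₂ * t₂) * v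
          - (star t₁ * star a₁ * t₁ + star t₂ * star a₂ * t₂) * v
          - star v * (star t₁ * a₁ * t₁ + star t₂ * a₂ * t₂) := by
        simp only [intertwiningDefect, star_sub, star_mul]
        noncomm_ring
    _ = 1 - star v * v := by
        rw [hsum, ← hdec, ← hstar, mul_one]
        abel

section CStarAlgebra

variable {A : Type*} [CStarAlgebra A] [PartialOrder A] [StarOrderedRing A]

lemma intertwiningDefect_nonneg {a t v : A} (ha : ‖a‖ ≤ 1) : 0 ≤ intertwiningDefect a t v :=
  add_nonneg (star_mul_self_nonneg _)
    (star_left_conjugate_nonneg (sub_nonneg.mpr (star_mul_self_le_one_of_norm_le_one ha)) t)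

lemma isometry_and_eq_conj_of_intertwiningDefect_eq_zero {a t s v : A} (ha : ‖a‖ ≤ 1)
    (hts : t * s = 1) (h : intertwiningDefect a t v = 0) :
    star a * a = 1 ∧ a = t * v * s := by
  have hc : 0 ≤ 1 - star a * a := sub_nonneg.mpr (star_mul_self_le_one_of_norm_le_one ha)
  obtain ⟨hb, hconj⟩ := (add_eq_zero_iff_of_nonneg (star_mul_self_nonneg _)
    (star_left_conjugate_nonneg hc t)).mp h
  have hat : a * t = t * v := sub_eq_zero.mp (CStarRing.star_mul_self_eq_zero_iff _ |>.mp hb)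
  refine ⟨(sub_eq_zero.mp (eq_zero_of_star_mul_mul_eq_zero hts hconj)).symm, ?_⟩
  rw [← hat, mul_assoc, hts, mul_one]

end CStarAlgebra

theorem isometry_proper_combination_general {H : Type*} [NormedAddCommGroup H]
    [InnerProductSpace ℂ H] [CompleteSpace H]
    (v a₁ a₂ t₁ t₂ s₁ s₂ : H →L[ℂ] H)
    (hv : star v * v = 1) (ha₁ : ‖a₁‖ ≤ 1) (ha₂ : ‖a₂‖ ≤ 1)
    (h₁ : t₁ * s₁ = 1) (h₂ : t₂ * s₂ = 1)
    (hsum : star t₁ * t₁ + star t₂ * t₂ = 1)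
    (hdec : v = star t₁ * a₁ * t₁ + star t₂ * a₂ * t₂) :
    star a₁ * a₁ = 1 ∧ star a₂ * a₂ = 1 ∧ a₁ = t₁ * v * s₁ ∧ a₂ = t₂ * v * s₂ := by
  have htotal := intertwiningDefect_add_intertwiningDefect hsum hdec
  rw [hv, sub_self] at htotal
  obtain ⟨hd₁, hd₂⟩ := (add_eq_zero_iff_of_nonneg (intertwiningDefect_nonneg ha₁)
    (intertwiningDefect_nonneg ha₂)).mp htotal
  obtain ⟨hiso₁, hsim₁⟩ := isometry_and_eq_conj_of_intertwiningDefect_eq_zero ha₁ h₁ hd₁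
  obtain ⟨hiso₂, hsim₂⟩ := isometry_and_eq_conj_of_intertwiningDefect_eq_zero ha₂ h₂ hd₂
  exact ⟨hiso₁, hiso₂, hsim₁, hsim₂⟩

/-- If an isometry `v` in a von Neumann algebra `M` is a proper C*-convex combination
`v = t₁* a₁ t₁ + t₂* a₂ t₂` of contractions `a₁, a₂ ∈ M` with `t₁, t₂ ∈ M` invertible
(with inverses `s₁, s₂ ∈ M`) and `t₁*t₁ + t₂*t₂ = 1`, then `a₁, a₂` are isometries
similar to `v`: `aᵢ = tᵢ v tᵢ⁻¹`. -/
theorem isometry_proper_combination {H : Type*} [NormedAddCommGroup H]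
    [InnerProductSpace ℂ H] [CompleteSpace H] (M : VonNeumannAlgebra H)
    (v a₁ a₂ t₁ t₂ s₁ s₂ : H →L[ℂ] H)
    (hvM : v ∈ M) (ha₁M : a₁ ∈ M) (ha₂M : a₂ ∈ M)
    (ht₁M : t₁ ∈ M) (ht₂M : t₂ ∈ M) (hs₁M : s₁ ∈ M) (hs₂M : s₂ ∈ M)
    (hv : star v * v = 1) (ha₁ : ‖a₁‖ ≤ 1) (ha₂ : ‖a₂‖ ≤ 1)
    (h₁ : t₁ * s₁ = 1) (h₁' : s₁ * t₁ = 1) (h₂ : t₂ * s₂ = 1) (h₂' : s₂ * t₂ = 1)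
    (hsum : star t₁ * t₁ + star t₂ * t₂ = 1)
    (hdec : v = star t₁ * a₁ * t₁ + star t₂ * a₂ * t₂) :
    star a₁ * a₁ = 1 ∧ star a₂ * a₂ = 1 ∧ a₁ = t₁ * v * s₁ ∧ a₂ = t₂ * v * s₂ :=
  isometry_proper_combination_general v a₁ a₂ t₁ t₂ s₁ s₂ hv ha₁ ha₂ h₁ h₂ hsum hdec
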